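/- arXiv:1811.04308 — 2 statements merged into one kernel-verified Lean document; each statement's English description precedes it below -/
import Mathlib

section
/- Fix n ∈ ℕ and a compact set K ⊂ ℂ. The map Q_n from H² \ {0} to C(K) sending f to (the restriction to K of) the optimal polynomial approximant Q_n(1/f) is continuous, where H² \ {0} carries the H² norm topology and C(K) the sup-norm topology. -/
open MeasureTheory Filter Metric Polynomial

noncomputable section

/-- The Hardy space `H²`, modelled as the space `ℓ²(ℕ, ℂ)` of square-summable
Taylor-coefficient sequences: `f : H2` represents the holomorphic function
`z ↦ ∑ₖ f k * z ^ k` on the unit disc, and the `lp`-norm of `f` is its `H²` norm. -/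
abbrev H2 := lp (fun _ : ℕ => ℂ) 2

/-- Value at `z` of the holomorphic function with Taylor coefficients `f`. -/
def h2Val (f : H2) (z : ℂ) : ℂ := ∑' k, f k * z ^ k

/-- `n`-th Taylor coefficient of the product of a polynomial `q` with the power series
having coefficients `a`. -/
def coeffMul (q : Polynomial ℂ) (a : ℕ → ℂ) (n : ℕ) : ℂ :=
  ∑ j ∈ Finset.range (n + 1), q.coeff j * a (n - j)

/-- Taylor coefficients of `q·f − 1`. -/
def errSeq (q : Polynomial ℂ) (f : H2) (n : ℕ) : ℂ :=
  coeffMul q (fun k => f k) n - if n = 0 then 1 else 0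

/-- The `H²` norm `‖q·f − 1‖_{H²}`. -/
def h2ErrNorm (q : Polynomial ℂ) (f : H2) : ℝ :=
  Real.sqrt (∑' n, ‖errSeq q f n‖ ^ 2)

/-- `Q` is an optimal polynomial approximant of order `n` of `1/f`: it has degree at
most `n` and minimizes `‖q·f − 1‖_{H²}` over all polynomials `q` of degree at most `n`. -/
def IsOpa (n : ℕ) (f : H2) (Q : Polynomial ℂ) : Prop :=
  Q.degree ≤ (n : WithBot ℕ) ∧
    ∀ q : Polynomial ℂ, q.degree ≤ (n : WithBot ℕ) → h2ErrNorm Q f ≤ h2ErrNorm q f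

open Classical in
/-- The optimal polynomial approximant `Q_n(1/f)` (well defined whenever the minimizer
exists and is unique, which is the case for every `f ≠ 0`). -/
def opa (n : ℕ) (f : H2) : Polynomial ℂ :=
  if h : ∃! Q : Polynomial ℂ, IsOpa n f Q then h.choose else 0

/-- Sup-distance of two functions over a set `E` (the distance in `C(E)`). -/
def supDist (E : Set ℂ) (u v : ℂ → ℂ) : ℝ := ⨆ z : E, ‖u z - v z‖

/-- `f` has universal optimal polynomial approximants on `E`: every continuous function
on `E` is the uniform limit on `E` of a subsequence of the sequence `Q_n(1/f)`. -/
def HasUniversalOpa (E : Set ℂ) (f : H2) : Prop :=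
  ∀ g : ℂ → ℂ, ContinuousOn g E →
    ∃ m : ℕ → ℕ, StrictMono m ∧
      TendstoUniformlyOn (fun s z => (opa (m s) f).eval z) g atTop E

/-- `E ⊆ 𝕋` has arc-length (Lebesgue) measure zero. -/
def circleNull (E : Set ℂ) : Prop :=
  volume {θ : ℝ | Complex.exp (θ * Complex.I) ∈ E} = 0

/-! For `f ≠ 0` the functions `zᵏ f`, `k ≤ n`, are linearly independent (the power series ring
is a domain), so the optimal approximant is `∑ₖ cₖ zᵏ` where `c` solves the normal equations
`G(f) c = (⟪zʲ f, 1⟫)ⱼ` for the invertible Gram matrix `G(f) = (⟪zʲ f, zᵏ f⟫)ⱼₖ`. Both `G(f)` and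
the right-hand side depend continuously on `f`, hence so does `c = G(f)⁻¹ (⟪zʲ f, 1⟫)ⱼ`, and a
polynomial of degree `≤ n` depends continuously on its coefficients in `C(K)`. -/

section Shift

variable {M : Type*} [Zero M]

def shiftSeq (k : ℕ) (a : ℕ → M) : ℕ → M := fun m => if k ≤ m then a (m - k) else 0

@[simp]
lemma shiftSeq_add (k : ℕ) (a : ℕ → M) (n : ℕ) : shiftSeq k a (n + k) = a n := by
  simp [shiftSeq]

lemma shiftSeq_of_lt {k m : ℕ} (a : ℕ → M) (h : m < k) : shiftSeq k a m = 0 :=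
  if_neg (by omega)

lemma apply_shiftSeq {N : Type*} [Zero N] {φ : M → N} (hφ : φ 0 = 0) (k : ℕ) (a : ℕ → M)
    (m : ℕ) : φ (shiftSeq k a m) = shiftSeq k (φ ∘ a) m := by
  unfold shiftSeq
  split_ifs <;> simp [hφ]

lemma hasSum_shiftSeq_iff {G : Type*} [AddCommGroup G] [TopologicalSpace G]
    [IsTopologicalAddGroup G] {k : ℕ} {a : ℕ → G} {s : G} :
    HasSum (shiftSeq k a) s ↔ HasSum a s := by
  rw [← hasSum_nat_add_iff' k, Finset.sum_eq_zero fun i hi =>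
    shiftSeq_of_lt a (Finset.mem_range.mp hi), sub_zero]
  simp only [shiftSeq_add]

end Shift

section lpShift

variable {𝕜 E : Type*} [NormedAddCommGroup E] {p : ENNReal}

lemma norm_rpow_shiftSeq (hp : 0 < p.toReal) (k : ℕ) (a : ℕ → E) :
    (fun m => ‖shiftSeq k a m‖ ^ p.toReal) = shiftSeq k fun m => ‖a m‖ ^ p.toReal :=
  funext <| apply_shiftSeq (φ := fun x : E => ‖x‖ ^ p.toReal) (by simp [hp.ne']) k a

lemma Memℓp.shiftSeq (hp : 0 < p.toReal) {a : ℕ → E} (ha : Memℓp a p) (k : ℕ) :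
    Memℓp (_root_.shiftSeq k a) p := by
  rw [memℓp_gen_iff hp] at ha ⊢
  rw [norm_rpow_shiftSeq hp]
  exact (hasSum_shiftSeq_iff.mpr ha.hasSum).summable

variable [NormedField 𝕜] [NormedSpace 𝕜 E] [Fact (1 ≤ p)]

def lp.shift (hp : p ≠ ⊤) (k : ℕ) : lp (fun _ : ℕ => E) p →ₗᵢ[𝕜] lp (fun _ : ℕ => E) p :=
  have hp' : 0 < p.toReal :=
    ENNReal.toReal_pos (zero_lt_one.trans_le Fact.out).ne' hp
  { toFun := fun f => ⟨shiftSeq k f, (lp.memℓp f).shiftSeq hp' k⟩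
    map_add' := fun f g => lp.ext <| funext fun m => by
      simp only [shiftSeq, lp.coeFn_add, Pi.add_apply]; split_ifs <;> simp
    map_smul' := fun c f => lp.ext <| funext fun m => by
      simp only [shiftSeq, lp.coeFn_smul, Pi.smul_apply, RingHom.id_apply]; split_ifs <;> simp
    norm_map' := fun f => by
      refine (Real.rpow_left_injOn hp'.ne' (norm_nonneg _) (norm_nonneg f)) ?_
      simp only [lp.norm_rpow_eq_tsum hp']
      change ∑' m, ‖shiftSeq k (⇑f) m‖ ^ p.toReal = _
      rw [norm_rpow_shiftSeq hp' k]
      exact (hasSum_shiftSeq_iff.mpr ((lp.memℓp f).summable hp').hasSum).tsum_eq }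

@[simp]
lemma lp.coe_shift (hp : p ≠ ⊤) (k : ℕ) (f : lp (fun _ : ℕ => E) p) :
    ⇑(lp.shift (𝕜 := 𝕜) hp k f) = shiftSeq k f :=
  rfl

lemma lp.norm_eq_sqrt_tsum_sq {α : Type*} {E : α → Type*} [∀ i, NormedAddCommGroup (E i)]
    (x : lp E 2) : ‖x‖ = Real.sqrt (∑' i, ‖x i‖ ^ 2) := by
  have h := lp.norm_rpow_eq_tsum (p := 2) (by norm_num) x
  simp only [ENNReal.toReal_ofNat, Real.rpow_two] at h
  rw [← h, Real.sqrt_sq (norm_nonneg x)]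

end lpShift

section LeastSquares

open Matrix

variable {𝕜 E ι : Type*} [RCLike 𝕜] [NormedAddCommGroup E] [InnerProductSpace 𝕜 E]
  [Fintype ι]

local notation "⟪" x ", " y "⟫" => inner 𝕜 x y

lemma inner_sum_smul_eq_gram_mulVec (v : ι → E) (c : ι → 𝕜) (j : ι) :
    ⟪v j, ∑ i, c i • v i⟫ = (gram 𝕜 v *ᵥ c) j := by
  simp [inner_sum, inner_smul_right, mulVec, dotProduct, mul_comm]

variable [DecidableEq ι]

variable (𝕜) in
def lstsqCoeff (v : ι → E) (e : E) : ι → 𝕜 :=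
  (gram 𝕜 v)⁻¹ *ᵥ fun j => ⟪v j, e⟫

lemma inner_sum_lstsqCoeff_smul_sub {v : ι → E} (hv : LinearIndependent 𝕜 v) (e : E) (j : ι) :
    ⟪v j, ∑ i, lstsqCoeff 𝕜 v e i • v i - e⟫ = 0 := by
  have hdet : IsUnit (gram 𝕜 v).det :=
    isUnit_iff_ne_zero.mpr (det_gram_ne_zero_iff_linearIndependent.mpr hv)
  rw [inner_sub_right, inner_sum_smul_eq_gram_mulVec, lstsqCoeff, mulVec_mulVec,
    mul_nonsing_inv _ hdet, one_mulVec, sub_self]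

lemma norm_sum_smul_sub_sq {v : ι → E} (hv : LinearIndependent 𝕜 v) (e : E) (c : ι → 𝕜) :
    ‖∑ i, c i • v i - e‖ ^ 2 =
      ‖∑ i, lstsqCoeff 𝕜 v e i • v i - e‖ ^ 2 + ‖∑ i, (c - lstsqCoeff 𝕜 v e) i • v i‖ ^ 2 := by
  set r := ∑ i, lstsqCoeff 𝕜 v e i • v i - e
  have hsplit : ∑ i, c i • v i - e = r + ∑ i, (c - lstsqCoeff 𝕜 v e) i • v i := by
    simp only [r, Pi.sub_apply, sub_smul, Finset.sum_sub_distrib]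
    abel
  have horth : ⟪r, ∑ i, (c - lstsqCoeff 𝕜 v e) i • v i⟫ = 0 := by
    refine (inner_sum _ _ _).trans (Finset.sum_eq_zero fun i _ => ?_)
    rw [inner_smul_right, ← inner_conj_symm, inner_sum_lstsqCoeff_smul_sub hv, map_zero, mul_zero]
  rw [hsplit, sq, sq, sq, norm_add_sq_eq_norm_sq_add_norm_sq_of_inner_eq_zero _ _ horth]

lemma norm_sum_lstsqCoeff_smul_sub_le {v : ι → E} (hv : LinearIndependent 𝕜 v) (e : E)
    (c : ι → 𝕜) : ‖∑ i, lstsqCoeff 𝕜 v e i • v i - e‖ ≤ ‖∑ i, c i • v i - e‖ := by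
  refine pow_le_pow_iff_left₀ (norm_nonneg _) (norm_nonneg _) two_ne_zero |>.mp ?_
  rw [norm_sum_smul_sub_sq hv e c]
  exact le_add_of_nonneg_right (sq_nonneg _)

lemma eq_lstsqCoeff_of_norm_sum_smul_sub_le {v : ι → E} (hv : LinearIndependent 𝕜 v) {e : E}
    {c : ι → 𝕜} (h : ‖∑ i, c i • v i - e‖ ≤ ‖∑ i, lstsqCoeff 𝕜 v e i • v i - e‖) :
    c = lstsqCoeff 𝕜 v e := by
  have hsq := pow_le_pow_left₀ (norm_nonneg _) h 2
  rw [norm_sum_smul_sub_sq hv e c] at hsq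
  have hzero : ∑ i, (c - lstsqCoeff 𝕜 v e) i • v i = 0 := by
    rw [← norm_eq_zero, ← sq_eq_zero_iff]
    linarith [sq_nonneg ‖∑ i, (c - lstsqCoeff 𝕜 v e) i • v i‖]
  exact sub_eq_zero.mp (funext (Fintype.linearIndependent_iff.mp hv _ hzero))

lemma continuousOn_lstsqCoeff (e : E) :
    ContinuousOn (fun v : ι → E => lstsqCoeff 𝕜 v e) {v | LinearIndependent 𝕜 v} := by
  intro v hv
  have hgram : Continuous fun w : ι → E => gram 𝕜 w :=
    continuous_matrix fun i j => (continuous_apply i).inner (continuous_apply j)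
  have hdet : (gram 𝕜 v).det ≠ 0 := det_gram_ne_zero_iff_linearIndependent.mpr hv
  have hinv : ContinuousAt (fun w : ι → E => (gram 𝕜 w)⁻¹) v :=
    (continuousAt_matrix_inv _ (NormedRing.inverse_continuousAt (Units.mk0 _ hdet))).comp
      hgram.continuousAt
  have hrhs : Continuous fun w : ι → E => fun j => ⟪w j, e⟫ :=
    continuous_pi fun j => (continuous_apply j).inner continuous_const
  exact ((continuous_fst.matrix_mulVec continuous_snd).continuousAt.comp
    (f := fun w => ((gram 𝕜 w)⁻¹, fun j => ⟪w j, e⟫))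
    (hinv.prodMk hrhs.continuousAt)).continuousWithinAt

end LeastSquares

namespace H2

/-- Multiplication by `z ^ k`. -/
abbrev shift (k : ℕ) : H2 →ₗᵢ[ℂ] H2 := lp.shift ENNReal.ofNat_ne_top k

def one : H2 := lp.single 2 0 1

def toPowerSeries : H2 →ₗ[ℂ] PowerSeries ℂ where
  toFun f := PowerSeries.mk f
  map_add' f g := by ext; simp only [lp.coeFn_add, PowerSeries.coeff_mk, map_add, Pi.add_apply]
  map_smul' c f := by ext; simp

@[simp]
lemma coeff_toPowerSeries (f : H2) (m : ℕ) : PowerSeries.coeff m (toPowerSeries f) = f m :=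
  PowerSeries.coeff_mk _ _

lemma toPowerSeries_injective : Function.Injective toPowerSeries := fun f g h =>
  lp.ext <| funext fun m => by simpa using congrArg (PowerSeries.coeff m) h

lemma toPowerSeries_shift (k : ℕ) (f : H2) :
    toPowerSeries (shift k f) = PowerSeries.X ^ k * toPowerSeries f := by
  ext m
  rw [PowerSeries.coeff_X_pow_mul', coeff_toPowerSeries, lp.coe_shift, shiftSeq]
  split_ifs <;> simp

lemma toPowerSeries_sum_smul_shift {N : ℕ} (c : Fin N → ℂ) (f : H2) :
    toPowerSeries (∑ k, c k • shift k f) = ofFn N c * toPowerSeries f := by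
  rw [ofFn_eq_sum_monomial, ← coeToPowerSeries.ringHom_apply, map_sum, map_sum, Finset.sum_mul]
  refine Finset.sum_congr rfl fun k _ => ?_
  rw [map_smul, toPowerSeries_shift, coeToPowerSeries.ringHom_apply, coe_monomial,
    PowerSeries.monomial_eq_C_mul_X_pow, PowerSeries.smul_eq_C_mul, mul_assoc]

lemma linearIndependent_shift {f : H2} (hf : f ≠ 0) (N : ℕ) :
    LinearIndependent ℂ fun k : Fin N => shift k f := by
  refine Fintype.linearIndependent_iff.mpr fun c hc => ?_
  have hmul : (ofFn N c : PowerSeries ℂ) * toPowerSeries f = 0 := by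
    rw [← toPowerSeries_sum_smul_shift, hc, map_zero]
  have hf' : toPowerSeries f ≠ 0 := fun h =>
    hf (toPowerSeries_injective (h.trans (map_zero _).symm))
  have hc0 : ofFn N c = 0 := coe_eq_zero_iff.mp ((mul_eq_zero.mp hmul).resolve_right hf')
  exact congrFun (injective_ofFn N (hc0.trans (map_zero _).symm))

end H2

lemma coeffMul_eq_coeff_mul (q : ℂ[X]) (a : ℕ → ℂ) (m : ℕ) :
    coeffMul q a m = PowerSeries.coeff m ((q : PowerSeries ℂ) * PowerSeries.mk a) := by
  rw [coeffMul, PowerSeries.coeff_mul, Finset.Nat.sum_antidiagonal_eq_sum_range_succ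
    (fun i j => PowerSeries.coeff i (q : PowerSeries ℂ) * PowerSeries.coeff j (PowerSeries.mk a))]
  simp

lemma h2ErrNorm_ofFn {n : ℕ} (c : Fin (n + 1) → ℂ) (f : H2) :
    h2ErrNorm (ofFn (n + 1) c) f = ‖∑ k, c k • H2.shift k f - H2.one‖ := by
  have herr : ∀ m, errSeq (ofFn (n + 1) c) f m = (∑ k, c k • H2.shift k f - H2.one) m := by
    intro m
    rw [errSeq, coeffMul_eq_coeff_mul, lp.coeFn_sub, Pi.sub_apply, ← H2.coeff_toPowerSeries,
      H2.toPowerSeries_sum_smul_shift, H2.one, lp.single_apply, Pi.single_apply]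
    rfl
  rw [h2ErrNorm, lp.norm_eq_sqrt_tsum_sq]
  simp only [herr]

lemma isOpa_iff {n : ℕ} {f : H2} (hf : f ≠ 0) {Q : ℂ[X]} :
    IsOpa n f Q ↔
      Q = ofFn (n + 1) (lstsqCoeff ℂ (fun k : Fin (n + 1) => H2.shift k f) H2.one) := by
  have hv := H2.linearIndependent_shift hf (n + 1)
  set c := lstsqCoeff ℂ (fun k : Fin (n + 1) => H2.shift k f) H2.one
  have hdeg : ∀ d : Fin (n + 1) → ℂ, (ofFn (n + 1) d).degree ≤ n := fun d =>
    degree_le_of_natDegree_le (Nat.lt_succ_iff.mp (ofFn_natDegree_lt (Nat.succ_pos n) d))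
  have hrepr : ∀ q : ℂ[X], q.degree ≤ n → ofFn (n + 1) (toFn (n + 1) q) = q := fun q hq =>
    ofFn_comp_toFn_eq_id_of_natDegree_lt (Nat.lt_succ_of_le (natDegree_le_of_degree_le hq))
  constructor
  · rintro ⟨hQ, hmin⟩
    have hle := hmin _ (hdeg c)
    rw [← hrepr Q hQ, h2ErrNorm_ofFn, h2ErrNorm_ofFn] at hle
    rw [← hrepr Q hQ, eq_lstsqCoeff_of_norm_sum_smul_sub_le hv hle]
  · rintro rfl
    refine ⟨hdeg _, fun q hq => ?_⟩
    rw [← hrepr q hq, h2ErrNorm_ofFn, h2ErrNorm_ofFn]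
    exact norm_sum_lstsqCoeff_smul_sub_le hv _ _

lemma opa_eq_ofFn_lstsqCoeff {n : ℕ} {f : H2} (hf : f ≠ 0) :
    opa n f = ofFn (n + 1) (lstsqCoeff ℂ (fun k : Fin (n + 1) => H2.shift k f) H2.one) := by
  have hunique : ∃! Q, IsOpa n f Q := ⟨_, (isOpa_iff hf).mpr rfl, fun _ => (isOpa_iff hf).mp⟩
  rw [opa, dif_pos hunique]
  exact (isOpa_iff hf).mp hunique.choose_spec.1

theorem opa_continuousOn_general (n : ℕ) (K : Set ℂ) :
    Continuous fun f : {f : H2 // f ≠ 0} => (opa n f.1).toContinuousMapOn K := by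
  have hshifts : Continuous fun f : {f : H2 // f ≠ 0} => fun k : Fin (n + 1) => H2.shift k f.1 :=
    continuous_pi fun k => (H2.shift k).continuous.comp continuous_subtype_val
  have hcoeff : Continuous fun f : {f : H2 // f ≠ 0} =>
      lstsqCoeff ℂ (fun k : Fin (n + 1) => H2.shift k f.1) H2.one :=
    (continuousOn_lstsqCoeff H2.one).comp_continuous hshifts
      fun f => H2.linearIndependent_shift f.2 (n + 1)
  have hpoly : Continuous fun c : Fin (n + 1) → ℂ => (ofFn (n + 1) c).toContinuousMapOn K :=
    ((toContinuousMapOnAlgHom K).toLinearMap.comp (ofFn (n + 1))).continuous_of_finiteDimensional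
  convert hpoly.comp hcoeff with f
  rw [Function.comp_apply, opa_eq_ofFn_lstsqCoeff f.2]

/-- For fixed `n` and compact `K ⊆ ℂ`, the map `f ↦ Q_n(1/f)|_K` from
`H² \ {0}` (with the `H²` norm topology) to `C(K)` (with the sup-norm topology, which
for compact `K` is the topology of `C(K, ℂ)`) is continuous. -/
theorem opa_continuousOn (n : ℕ) (K : Set ℂ) (hK : IsCompact K) :
    Continuous fun f : {f : H2 // f ≠ 0} => (opa n f.1).toContinuousMapOn K :=
  opa_continuousOn_general n K

end
end

section
/- Let E ⊆ 𝕋 be closed, let f ∈ H² be not identically zero, and let g be an inner function in H² (i.e., a holomorphic function on 𝔻 such that multiplication by g is an isometry of H²) with g(0) ≠ 0. Then f has universal optimal polynomial approximants on E if and only if fg has universal optimal polynomial approximants on E. -/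
open MeasureTheory Filter Metric Polynomial

noncomputable section

/-- Coefficients of the product of the power series with coefficients `g` and the power
series with coefficients `a` (Cauchy product). -/
def convSeq (g : ℕ → ℂ) (a : ℕ → ℂ) (n : ℕ) : ℂ :=
  ∑ j ∈ Finset.range (n + 1), g j * a (n - j)

/-! Write `c = conj (g 0)`. Multiplication by `g` is an isometry whose adjoint sends `1` to `c`, so
expanding the square gives, for every polynomial `q`,
`‖q f g − 1‖² = |g 0|² ‖(c⁻¹ q) f − 1‖² + 1 − |g 0|²`.
Hence `q ↦ c⁻¹ q` maps the minimizers for `f g` bijectively onto those for `f`, that is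
`Q_n(1/(f g)) = c Q_n(1/f)` for every `n`, and a nonzero constant multiple of a sequence with
universal subsequential limits on `E` has them too. -/

open scoped ENNReal ComplexConjugate

section Sequences

lemma coeffMul_add_left (q r : ℂ[X]) (a : ℕ → ℂ) :
    coeffMul (q + r) a = coeffMul q a + coeffMul r a := by
  funext n
  simp only [coeffMul, coeff_add, add_mul, Finset.sum_add_distrib, Pi.add_apply]

lemma coeffMul_monomial (j : ℕ) (c : ℂ) (a : ℕ → ℂ) (n : ℕ) :
    coeffMul (monomial j c) a n = if j ≤ n then c * a (n - j) else 0 := by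
  simp [coeffMul, coeff_monomial]

lemma coeffMul_smul (c : ℂ) (q : ℂ[X]) (a : ℕ → ℂ) :
    coeffMul (c • q) a = c • coeffMul q a := by
  funext n
  simp [coeffMul, Finset.mul_sum, mul_assoc]

variable {p : ℝ≥0∞} {a : ℕ → ℂ}

lemma Memℓp.coeffMul_monomial (ha : Memℓp a p) (hp : 0 < p.toReal) (j : ℕ) (c : ℂ) :
    Memℓp (coeffMul (monomial j c) a) p := by
  refine memℓp_gen ?_
  rw [← summable_nat_add_iff j]
  simpa [_root_.coeffMul_monomial, norm_mul, Real.mul_rpow] using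
    ((ha.summable hp).mul_left (‖c‖ ^ p.toReal))

lemma Memℓp.coeffMul (ha : Memℓp a p) (hp : 0 < p.toReal) (q : ℂ[X]) :
    Memℓp (coeffMul q a) p := by
  induction q using Polynomial.induction_on' with
  | add q r hq hr => rw [coeffMul_add_left]; exact hq.add hr
  | monomial j c => exact ha.coeffMul_monomial hp j c

lemma convSeq_eq_coeff_mul (g a : ℕ → ℂ) (n : ℕ) :
    convSeq g a n = PowerSeries.coeff n (PowerSeries.mk g * PowerSeries.mk a) := by
  rw [PowerSeries.coeff_mul, Finset.Nat.sum_antidiagonal_eq_sum_range_succ_mk]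
  simp [convSeq]

lemma coeffMul_convSeq (q : ℂ[X]) (g a : ℕ → ℂ) :
    coeffMul q (convSeq g a) = convSeq g (coeffMul q a) := by
  have hmk : ∀ b c : ℕ → ℂ, PowerSeries.mk (convSeq b c) = PowerSeries.mk b * PowerSeries.mk c :=
    fun b c => PowerSeries.ext fun n => by rw [PowerSeries.coeff_mk, convSeq_eq_coeff_mul]
  funext n
  change convSeq _ _ n = convSeq _ (convSeq _ _) n
  rw [convSeq_eq_coeff_mul, convSeq_eq_coeff_mul, hmk, hmk, mul_left_comm]

end Sequences

lemma norm_sub_sq_eq_of_norm_eq_of_inner_eq {𝕜 V : Type*} [RCLike 𝕜] [NormedAddCommGroup V]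
    [InnerProductSpace 𝕜 V] {x y e u : V} (hn : ‖y‖ = ‖x‖) (hi : inner 𝕜 y e = inner 𝕜 x u) :
    ‖y - e‖ ^ 2 = ‖x - u‖ ^ 2 + (‖e‖ ^ 2 - ‖u‖ ^ 2) := by
  rw [@norm_sub_sq 𝕜, @norm_sub_sq 𝕜, hn, hi]
  ring

section Hardy

def h2One : H2 := lp.single 2 0 1

lemma h2One_apply (n : ℕ) : h2One n = if n = 0 then 1 else 0 := by
  simp [h2One, Pi.single_apply]

lemma norm_h2One : ‖h2One‖ = 1 := by
  simp [h2One, lp.norm_single]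

lemma inner_h2One_right (x : H2) : inner ℂ x h2One = conj (x 0) := by
  simp [h2One, lp.inner_single_right]

def polyMul (q : ℂ[X]) (f : H2) : H2 :=
  ⟨coeffMul q (fun k => f k), (lp.memℓp f).coeffMul (by norm_num) q⟩

lemma h2ErrNorm_eq_norm (q : ℂ[X]) (f : H2) : h2ErrNorm q f = ‖polyMul q f - h2One‖ := by
  have h := lp.norm_rpow_eq_tsum (p := 2) (by norm_num) (polyMul q f - h2One)
  norm_num at h
  rw [h2ErrNorm, ← Real.sqrt_sq (norm_nonneg (polyMul q f - h2One)), h]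
  simp [errSeq, polyMul, h2One_apply]

lemma h2ErrNorm_nonneg (q : ℂ[X]) (f : H2) : 0 ≤ h2ErrNorm q f :=
  Real.sqrt_nonneg _

lemma polyMul_sub_smul_h2One (q : ℂ[X]) (f : H2) {c : ℂ} (hc : c ≠ 0) :
    polyMul q f - c • h2One = c • (polyMul (c⁻¹ • q) f - h2One) := by
  ext n
  simp [polyMul, coeffMul_smul, smul_sub, smul_smul, hc]

variable {g : ℕ → ℂ} (hmem : ∀ h : H2, Memℓp (convSeq g (fun k => h k)) 2)

lemma polyMul_convSeq (q : ℂ[X]) (f : H2) :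
    polyMul q ⟨convSeq g (fun k => f k), hmem f⟩ =
      ⟨convSeq g (fun k => polyMul q f k), hmem (polyMul q f)⟩ :=
  lp.ext (coeffMul_convSeq q g _)

lemma sq_h2ErrNorm_convSeq (hiso : ∀ h : H2, ‖(⟨convSeq g (fun k => h k), hmem h⟩ : H2)‖ = ‖h‖)
    (hg0 : g 0 ≠ 0) (q : ℂ[X]) (f : H2) :
    h2ErrNorm q ⟨convSeq g (fun k => f k), hmem f⟩ ^ 2 =
      ‖g 0‖ ^ 2 * h2ErrNorm ((conj (g 0))⁻¹ • q) f ^ 2 + (1 - ‖g 0‖ ^ 2) := by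
  have hc : conj (g 0) ≠ 0 := star_ne_zero.mpr hg0
  have hinner : inner ℂ (⟨convSeq g (fun k => polyMul q f k), hmem (polyMul q f)⟩ : H2) h2One =
      inner ℂ (polyMul q f) (conj (g 0) • h2One) := by
    rw [inner_h2One_right, inner_smul_right, inner_h2One_right]
    simp [convSeq]
  rw [h2ErrNorm_eq_norm, h2ErrNorm_eq_norm, polyMul_convSeq,
    norm_sub_sq_eq_of_norm_eq_of_inner_eq (hiso _) hinner,
    polyMul_sub_smul_h2One _ _ hc]
  simp [norm_smul, norm_h2One, mul_pow]

lemma h2ErrNorm_convSeq_le_iff (hiso : ∀ h : H2, ‖(⟨convSeq g (fun k => h k), hmem h⟩ : H2)‖ = ‖h‖)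
    (hg0 : g 0 ≠ 0) (q q' : ℂ[X]) (f : H2) :
    h2ErrNorm q ⟨convSeq g (fun k => f k), hmem f⟩ ≤
        h2ErrNorm q' ⟨convSeq g (fun k => f k), hmem f⟩ ↔
      h2ErrNorm ((conj (g 0))⁻¹ • q) f ≤ h2ErrNorm ((conj (g 0))⁻¹ • q') f := by
  simp only [← sq_le_sq₀ (h2ErrNorm_nonneg _ _) (h2ErrNorm_nonneg _ _),
    sq_h2ErrNorm_convSeq hmem hiso hg0, add_le_add_iff_right]
  exact mul_le_mul_iff_right₀ (by positivity)

end Hardy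

section Opa

variable {n : ℕ} {F F₁ F₂ : H2} {c : ℂ}

lemma isOpa_iff_of_h2ErrNorm_le_iff (hc : c ≠ 0)
    (h : ∀ q q', h2ErrNorm q F₂ ≤ h2ErrNorm q' F₂ ↔
      h2ErrNorm (c⁻¹ • q) F₁ ≤ h2ErrNorm (c⁻¹ • q') F₁)
    (Q : ℂ[X]) : IsOpa n F₂ Q ↔ IsOpa n F₁ (c⁻¹ • Q) := by
  have hc' : c⁻¹ ≠ 0 := inv_ne_zero hc
  have hdeg (q : ℂ[X]) : (c⁻¹ • q).degree = q.degree :=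
    degree_smul_of_smul_regular q (.of_ne_zero hc')
  rw [IsOpa, IsOpa, hdeg]
  refine and_congr_right fun _ =>
    (LinearEquiv.smulOfNeZero ℂ ℂ[X] c⁻¹ hc').toEquiv.forall_congr fun q => ?_
  simp [hdeg, h]

lemma opa_eq_of_isOpa {Q : ℂ[X]} (h : ∃! Q, IsOpa n F Q) (hQ : IsOpa n F Q) : opa n F = Q := by
  rw [opa, dif_pos h]
  exact h.unique h.choose_spec.1 hQ

lemma opa_eq_smul_of_isOpa_iff (hc : c ≠ 0) (h : ∀ Q, IsOpa n F₂ Q ↔ IsOpa n F₁ (c⁻¹ • Q)) :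
    opa n F₂ = c • opa n F₁ := by
  have h' (Q : ℂ[X]) : IsOpa n F₁ Q ↔ IsOpa n F₂ (c • Q) := by rw [h, inv_smul_smul₀ hc]
  have hu : (∃! Q, IsOpa n F₁ Q) ↔ ∃! Q, IsOpa n F₂ Q :=
    (LinearEquiv.smulOfNeZero ℂ ℂ[X] c hc).toEquiv.existsUnique_congr h'
  by_cases hu₁ : ∃! Q, IsOpa n F₁ Q
  · have hopa₁ : opa n F₁ = hu₁.choose := by rw [opa, dif_pos hu₁]
    rw [hopa₁]
    exact opa_eq_of_isOpa (hu.mp hu₁) ((h' _).mp hu₁.choose_spec.1)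
  · rw [opa, opa, dif_neg hu₁, dif_neg (hu.not.mp hu₁), smul_zero]

lemma HasUniversalOpa.of_opa_eq_smul {E : Set ℂ} (hc : c ≠ 0) (h : ∀ n, opa n F₂ = c • opa n F₁)
    (hF : HasUniversalOpa E F₁) : HasUniversalOpa E F₂ := by
  intro t ht
  obtain ⟨m, hm, hconv⟩ := hF (fun z => c⁻¹ * t z) (continuousOn_const.mul ht)
  refine ⟨m, hm, ?_⟩
  simpa [Function.comp_def, h, mul_inv_cancel_left₀ hc] using
    (uniformContinuous_const_smul c).comp_tendstoUniformlyOn hconv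

end Opa

theorem universalOpa_iff_inner_multiple_general (E : Set ℂ) (f : H2) (g : ℕ → ℂ) (hg0 : g 0 ≠ 0)
    (hmem : ∀ h : H2, Memℓp (convSeq g (fun k => h k)) 2)
    (hiso : ∀ h : H2, ‖(⟨convSeq g (fun k => h k), hmem h⟩ : H2)‖ = ‖h‖) :
    HasUniversalOpa E f ↔
      HasUniversalOpa E (⟨convSeq g (fun k => f k), hmem f⟩ : H2) := by
  have hc : conj (g 0) ≠ 0 := star_ne_zero.mpr hg0
  have hopa (n : ℕ) : opa n ⟨convSeq g (fun k => f k), hmem f⟩ = conj (g 0) • opa n f :=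
    opa_eq_smul_of_isOpa_iff hc <| isOpa_iff_of_h2ErrNorm_le_iff hc fun q q' =>
      h2ErrNorm_convSeq_le_iff hmem hiso hg0 q q' f
  exact ⟨.of_opa_eq_smul hc hopa, .of_opa_eq_smul (inv_ne_zero hc) fun n => by
    rw [hopa, inv_smul_smul₀ hc]⟩

/-- Let `E ⊆ 𝕋` be closed, `f ∈ H²` nonzero, and `g` inner
(multiplication by `g` is an isometry of `H²`; `g` is given by its Taylor-coefficient
sequence, so that `g(0) = g 0`) with `g 0 ≠ 0`. Then `f` has universal optimal
polynomial approximants on `E` iff `fg` does. -/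
theorem universalOpa_iff_inner_multiple (E : Set ℂ) (hE : E ⊆ sphere (0 : ℂ) 1)
    (hEclosed : IsClosed E) (f : H2) (hf : f ≠ 0) (g : ℕ → ℂ) (hg0 : g 0 ≠ 0)
    (hmem : ∀ h : H2, Memℓp (convSeq g (fun k => h k)) 2)
    (hiso : ∀ h : H2, ‖(⟨convSeq g (fun k => h k), hmem h⟩ : H2)‖ = ‖h‖) :
    HasUniversalOpa E f ↔
      HasUniversalOpa E (⟨convSeq g (fun k => f k), hmem f⟩ : H2) :=
  universalOpa_iff_inner_multiple_general E f g hg0 hmem hiso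

end
end
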